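/- arXiv:1011.6434 — 3 statements merged into one kernel-verified Lean document; each statement's English description precedes it below -/
import Mathlib

section
/- For every a ∈ Σ and every healthy set T of availability traces, the set prefix_a(T) is healthy. -/
/-- An availability action over the alphabet `E`: `Sum.inl a` is an ordinary event `a ∈ Σ`,
and `Sum.inr a` is the offer `◎a` of the event `a ∈ Σ`. -/
abbrev Act (E : Type*) := E ⊕ E

variable {E : Type*}

/-- A set `T` of availability traces is healthy (a member of the Availability Traces Model):
(1) nonempty and prefix-closed; (2) offers can be duplicated or removed; (3) an offered
event can be performed; (4) a performed event can first be offered. -/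
def Healthy (T : Set (List (Act E))) : Prop :=
  T.Nonempty ∧
  (∀ s t : List (Act E), s ++ t ∈ T → s ∈ T) ∧
  (∀ (tr : List (Act E)) (a : E) (tr' : List (Act E)),
    tr ++ [Sum.inr a] ++ tr' ∈ T →
      tr ++ [Sum.inr a, Sum.inr a] ++ tr' ∈ T ∧ tr ++ tr' ∈ T) ∧
  (∀ (tr : List (Act E)) (a : E), tr ++ [Sum.inr a] ∈ T → tr ++ [Sum.inl a] ∈ T) ∧
  (∀ (tr : List (Act E)) (a : E) (tr' : List (Act E)),
    tr ++ [Sum.inl a] ++ tr' ∈ T → tr ++ [Sum.inr a, Sum.inl a] ++ tr' ∈ T)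

/-- The semantics of prefixing `a → ·`: `prefixA a T` consists of all finite lists of offers
`◎a`, together with all traces `s ++ [a] ++ t` where `s` is a list of offers `◎a` and `t ∈ T`. -/
def prefixA (a : E) (T : Set (List (Act E))) : Set (List (Act E)) :=
  {s | ∀ x ∈ s, x = (Sum.inr a : Act E)} ∪
  {u | ∃ s t, (∀ x ∈ s, x = (Sum.inr a : Act E)) ∧ t ∈ T ∧ u = s ++ [Sum.inl a] ++ t}

private lemma split3 {α : Type*} {tr : List α} {x : α} {tr' s : List α} {y : α} {t : List α}
    (h : tr ++ [x] ++ tr' = s ++ [y] ++ t) :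
    (∃ m, s = tr ++ x :: m ∧ tr' = m ++ [y] ++ t) ∨
    (tr = s ∧ x = y ∧ tr' = t) ∨
    (∃ m, tr = s ++ y :: m ∧ t = m ++ [x] ++ tr') := by
  have h' : tr ++ (x :: tr') = s ++ (y :: t) := by simpa using h
  rcases List.append_eq_append_iff.mp h' with ⟨m, hs, hm⟩ | ⟨m, hs, hm⟩
  · cases m with
    | nil =>
      right; left
      simp only [List.append_nil] at hs
      cases hm; exact ⟨hs.symm, rfl, rfl⟩
    | cons z m =>
      left
      cases hm
      exact ⟨m, by simpa using hs, by simp⟩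
  · cases m with
    | nil =>
      right; left
      simp only [List.append_nil] at hs
      cases hm; exact ⟨hs, rfl, rfl⟩
    | cons z m =>
      right; right
      cases hm
      exact ⟨m, by simpa using hs, by simp⟩

/-- Prefixing preserves healthiness. -/
theorem prefixA_healthy {E : Type*} (a : E) (T : Set (List (Act E))) (hT : Healthy T) :
    Healthy (prefixA a T) := by
  obtain ⟨hne, hpre, hdup, hperf, hoff⟩ := hT
  have hnilT : ([] : List (Act E)) ∈ T := by
    obtain ⟨u, hu⟩ := hne
    simpa using hpre [] u (by simpa using hu)
  refine ⟨⟨[], Or.inl (by simp)⟩, ?_, ?_, ?_, ?_⟩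
  · -- prefix closed
    rintro s t (h | ⟨s', t', hs', ht', heq⟩)
    · exact Or.inl fun x hx => h x (List.mem_append.mpr (Or.inl hx))
    · have h' : s ++ t = s' ++ (Sum.inl a :: t') := by simpa using heq
      rcases List.append_eq_append_iff.mp h' with ⟨m, hs, hm⟩ | ⟨m, hs, hm⟩
      · exact Or.inl fun x hx => hs' x (by rw [hs]; exact List.mem_append.mpr (Or.inl hx))
      · cases m with
        | nil => exact Or.inl fun x hx => hs' x (by simpa [hs, List.append_nil] using hx)
        | cons z m =>
          cases hm
          right
          exact ⟨s', m, hs', hpre m t (by simpa using ht'), by simpa using hs⟩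
  · -- dup / remove offers
    rintro tr b tr' (h | ⟨s, t, hs, ht, heq⟩)
    · have hb : (Sum.inr b : Act E) = Sum.inr a := h _ (by simp)
      constructor
      · exact Or.inl fun x hx => by
          rcases List.mem_append.mp hx with hx | hx
          · rcases List.mem_append.mp hx with hx | hx
            · exact h x (by simp [hx])
            · have hx' : x = Sum.inr b := by simpa using hx
              exact hx'.trans hb
          · exact h x (by simp [hx])
      · exact Or.inl fun x hx => by
          rcases List.mem_append.mp hx with hx | hx
          · exact h x (by simp [hx])
          · exact h x (by simp [hx])
    · rcases split3 heq with ⟨m, hsm, htr'⟩ | ⟨_, hba, _⟩ | ⟨m, htr, htm⟩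
      · have htrA : ∀ x ∈ tr, x = (Sum.inr a : Act E) := fun x hx =>
          hs x (by rw [hsm]; exact List.mem_append.mpr (Or.inl hx))
        have hbA : (Sum.inr b : Act E) = Sum.inr a := hs _ (by rw [hsm]; simp)
        have hmA : ∀ x ∈ m, x = (Sum.inr a : Act E) := fun x hx =>
          hs x (by rw [hsm]; simp [hx])
        constructor
        · right
          refine ⟨tr ++ Sum.inr b :: Sum.inr b :: m, t, ?_, ht, by simp [htr']⟩
          intro x hx
          rcases List.mem_append.mp hx with hx | hx
          · exact htrA x hx
          · simp only [List.mem_cons] at hx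
            rcases hx with rfl | rfl | hx
            · exact hbA
            · exact hbA
            · exact hmA x hx
        · right
          refine ⟨tr ++ m, t, ?_, ht, by simp [htr']⟩
          intro x hx
          rcases List.mem_append.mp hx with hx | hx
          · exact htrA x hx
          · exact hmA x hx
      · exact absurd hba (by simp)
      · have h1 := hdup m b tr' (by rw [← htm]; exact ht)
        constructor
        · right
          exact ⟨s, m ++ [Sum.inr b, Sum.inr b] ++ tr', hs, h1.1, by simp [htr]⟩
        · right
          exact ⟨s, m ++ tr', hs, h1.2, by simp [htr]⟩
  · -- perform an offered event
    rintro tr b (h | ⟨s, t, hs, ht, heq⟩)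
    · have hb : (Sum.inr b : Act E) = Sum.inr a := h _ (by simp)
      have hb' : b = a := by injection hb
      subst hb'
      right
      exact ⟨tr, [], fun x hx => h x (by simp [hx]), hnilT, by simp⟩
    · rcases split3 (tr' := ([] : List (Act E))) (by simpa using heq)
        with ⟨m, _, htr'⟩ | ⟨_, hba, _⟩ | ⟨m, htr, htm⟩
      · exact absurd htr'.symm (by simp)
      · exact absurd hba (by simp)
      · have h1 := hperf m b (by rw [show m ++ [Sum.inr b] = t by simpa using htm.symm]; exact ht)
        right
        exact ⟨s, m ++ [Sum.inl b], hs, h1, by simp [htr]⟩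
  · -- offer before perform
    rintro tr b tr' (h | ⟨s, t, hs, ht, heq⟩)
    · exact absurd (h (Sum.inl b) (by simp)) (by simp)
    · rcases split3 heq with ⟨m, hsm, _⟩ | ⟨htr, hba, htr'⟩ | ⟨m, htr, htm⟩
      · exact absurd (hs (Sum.inl b) (by rw [hsm]; simp)) (by simp)
      · have hb' : b = a := by injection hba
        right
        refine ⟨s ++ [Sum.inr a], t, ?_, ht, by simp [htr, htr', hb']⟩
        intro x hx
        rcases List.mem_append.mp hx with hx | hx
        · exact hs x hx
        · simpa using hx
      · have h1 := hoff m b tr' (by rw [← htm]; exact ht)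
        right
        exact ⟨s, m ++ [Sum.inr b, Sum.inl b] ++ tr', hs, h1, by simp [htr]⟩
end

section
/- For all healthy sets T and U of availability traces, the set extchoice(T, U) is healthy. -/
variable {E : Type*}

/-- A trace contains no ordinary events (only offers). -/
def NoEvents (s : List (Act E)) : Prop := ∀ x ∈ s, ∃ a : E, x = Sum.inr a

/-- `Shuffle s t u` holds iff `u` is an interleaving of `s` and `t`. -/
inductive Shuffle {α : Type*} : List α → List α → List α → Prop
  | nil : Shuffle [] [] []
  | left {x : α} {s t u} : Shuffle s t u → Shuffle (x :: s) t (x :: u)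
  | right {x : α} {s t u} : Shuffle s t u → Shuffle s (x :: t) (x :: u)

/-- The semantics of external choice: before the first ordinary event, offers of both sides
are interleaved; once a side performs an ordinary event, the other side is turned off. -/
def extchoice (T U : Set (List (Act E))) : Set (List (Act E)) :=
  {tr | ∃ s ∈ T, ∃ t ∈ U, NoEvents s ∧ NoEvents t ∧ Shuffle s t tr} ∪
  {v | ∃ (a : E) (s s' t tr : List (Act E)),
      s ++ [Sum.inl a] ++ s' ∈ T ∧ NoEvents s ∧ t ∈ U ∧ NoEvents t ∧
      Shuffle s t tr ∧ v = tr ++ [Sum.inl a] ++ s'} ∪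
  {v | ∃ (a : E) (t t' s tr : List (Act E)),
      t ++ [Sum.inl a] ++ t' ∈ U ∧ NoEvents t ∧ s ∈ T ∧ NoEvents s ∧
      Shuffle s t tr ∧ v = tr ++ [Sum.inl a] ++ t'}


section Helpers
variable {α : Type*}

theorem shuffle_nil_left : ∀ t : List α, Shuffle [] t t
  | [] => .nil
  | _ :: t => .right (shuffle_nil_left t)

theorem shuffle_nil_right : ∀ s : List α, Shuffle s [] s
  | [] => .nil
  | _ :: s => .left (shuffle_nil_right s)

theorem Shuffle.comm {s t u : List α} (h : Shuffle s t u) : Shuffle t s u := by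
  induction h with
  | nil => exact .nil
  | left _ ih => exact .right ih
  | right _ ih => exact .left ih

theorem shuffle_prepend (r : List α) {s t u : List α} (h : Shuffle s t u) :
    Shuffle (r ++ s) t (r ++ u) := by
  induction r with
  | nil => exact h
  | cons x r ih => exact .left ih

theorem shuffle_append_end {s t u : List α} (h : Shuffle s t u) (v : List α) :
    Shuffle (s ++ v) t (u ++ v) := by
  induction h with
  | nil => simpa using shuffle_nil_right v
  | left _ ih => exact .left ih
  | right _ ih => exact .right ih

theorem shuffle_eq_nil {s t : List α} (h : Shuffle s t []) : s = [] ∧ t = [] := by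
  cases h; exact ⟨rfl, rfl⟩

theorem shuffle_last {s t u : List α} {x : α} (h : Shuffle s t (u ++ [x])) :
    (∃ s0, s = s0 ++ [x] ∧ Shuffle s0 t u) ∨ (∃ t0, t = t0 ++ [x] ∧ Shuffle s t0 u) := by
  induction u generalizing s t with
  | nil =>
    cases h with
    | left h => obtain ⟨rfl, rfl⟩ := shuffle_eq_nil h; exact .inl ⟨[], rfl, .nil⟩
    | right h => obtain ⟨rfl, rfl⟩ := shuffle_eq_nil h; exact .inr ⟨[], rfl, .nil⟩
  | cons y u ih =>
    cases h with
    | left h =>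
      rcases ih h with ⟨s0, rfl, hs⟩ | ⟨t0, rfl, ht⟩
      · exact .inl ⟨y :: s0, rfl, .left hs⟩
      · exact .inr ⟨t0, rfl, .left ht⟩
    | right h =>
      rcases ih h with ⟨s0, rfl, hs⟩ | ⟨t0, rfl, ht⟩
      · exact .inl ⟨s0, rfl, .right hs⟩
      · exact .inr ⟨y :: t0, rfl, .right ht⟩

theorem shuffle_prefix {s t u : List α} (h : Shuffle s t u) :
    ∀ p q : List α, u = p ++ q →
      ∃ s1 s2 t1 t2, s = s1 ++ s2 ∧ t = t1 ++ t2 ∧ Shuffle s1 t1 p := by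
  induction h with
  | nil =>
    intro p q hpq
    obtain ⟨rfl, rfl⟩ := List.append_eq_nil_iff.mp hpq.symm
    exact ⟨[], [], [], [], rfl, rfl, .nil⟩
  | @left x s t u h ih =>
    intro p q hpq
    cases p with
    | nil => exact ⟨[], x :: s, [], t, rfl, rfl, .nil⟩
    | cons y p =>
      injection hpq with h1 h2
      subst h1
      obtain ⟨s1, s2, t1, t2, rfl, rfl, hsh⟩ := ih p q h2
      exact ⟨x :: s1, s2, t1, t2, rfl, rfl, .left hsh⟩
  | @right x s t u h ih =>
    intro p q hpq
    cases p with
    | nil => exact ⟨[], s, [], x :: t, rfl, rfl, .nil⟩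
    | cons y p =>
      injection hpq with h1 h2
      subst h1
      obtain ⟨s1, s2, t1, t2, rfl, rfl, hsh⟩ := ih p q h2
      exact ⟨s1, s2, x :: t1, t2, rfl, rfl, .right hsh⟩

theorem shuffle_middle {s t u : List α} (h : Shuffle s t u) :
    ∀ (p : List α) (x : α) (q : List α), u = p ++ x :: q →
      (∃ s1 s2, s = s1 ++ x :: s2 ∧ ∀ r, Shuffle (s1 ++ r ++ s2) t (p ++ r ++ q)) ∨
      (∃ t1 t2, t = t1 ++ x :: t2 ∧ ∀ r, Shuffle s (t1 ++ r ++ t2) (p ++ r ++ q)) := by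
  induction h with
  | nil => intro p x q hpq; simp at hpq
  | @left y s t u h ih =>
    intro p x q hpq
    cases p with
    | nil =>
      injection hpq with h1 h2
      subst h1; subst h2
      exact .inl ⟨[], s, rfl, fun r => by simpa using shuffle_prepend r h⟩
    | cons z p =>
      injection hpq with h1 h2
      subst h1
      rcases ih p x q h2 with ⟨s1, s2, rfl, hr⟩ | ⟨t1, t2, rfl, hr⟩
      · exact .inl ⟨y :: s1, s2, rfl, fun r => .left (hr r)⟩
      · exact .inr ⟨t1, t2, rfl, fun r => .left (hr r)⟩
  | @right y s t u h ih =>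
    intro p x q hpq
    cases p with
    | nil =>
      injection hpq with h1 h2
      subst h1; subst h2
      exact .inr ⟨[], t, rfl, fun r => by simpa using shuffle_prepend r h.comm |>.comm⟩
    | cons z p =>
      injection hpq with h1 h2
      subst h1
      rcases ih p x q h2 with ⟨s1, s2, rfl, hr⟩ | ⟨t1, t2, rfl, hr⟩
      · exact .inl ⟨s1, s2, rfl, fun r => .right (hr r)⟩
      · exact .inr ⟨y :: t1, t2, rfl, fun r => .right (hr r)⟩

theorem append_cons_eq_append_cons {p q r w : List α} {x y : α}
    (h : p ++ x :: q = r ++ y :: w) :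
    (p = r ∧ x = y ∧ q = w) ∨
    (∃ m, r = p ++ x :: m ∧ q = m ++ y :: w) ∨
    (∃ m, p = r ++ y :: m ∧ w = m ++ x :: q) := by
  induction p generalizing r with
  | nil =>
    cases r with
    | nil => injection h with h1 h2; exact .inl ⟨rfl, h1, h2⟩
    | cons z r =>
      injection h with h1 h2
      subst h1
      exact .inr (.inl ⟨r, rfl, h2⟩)
  | cons a p ih =>
    cases r with
    | nil =>
      injection h with h1 h2
      subst h1
      exact .inr (.inr ⟨p, rfl, h2.symm⟩)
    | cons b r =>
      injection h with h1 h2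
      subst h1
      rcases ih h2 with ⟨rfl, rfl, rfl⟩ | ⟨m, rfl, rfl⟩ | ⟨m, rfl, rfl⟩
      · exact .inl ⟨rfl, rfl, rfl⟩
      · exact .inr (.inl ⟨m, rfl, rfl⟩)
      · exact .inr (.inr ⟨m, rfl, rfl⟩)

end Helpers

section NE
variable {E : Type*}

theorem noEvents_append {s t : List (Act E)} :
    NoEvents (s ++ t) ↔ NoEvents s ∧ NoEvents t := by
  simp [NoEvents, or_imp, forall_and]

theorem shuffle_noEvents {s t u : List (Act E)} (hs : NoEvents s) (ht : NoEvents t)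
    (h : Shuffle s t u) : NoEvents u := by
  induction h with
  | nil => exact hs
  | @left x s t u h ih =>
    intro y hy
    rcases List.mem_cons.mp hy with rfl | hy
    · exact hs y (by simp)
    · exact ih (fun z hz => hs z (by simp [hz])) ht y hy
  | @right x s t u h ih =>
    intro y hy
    rcases List.mem_cons.mp hy with rfl | hy
    · exact ht y (by simp)
    · exact ih hs (fun z hz => ht z (by simp [hz])) y hy

theorem noEvents_two {E : Type*} (a : E) : NoEvents [Sum.inr a, Sum.inr a] := by
  intro x hx
  simp only [List.mem_cons, List.not_mem_nil, or_false] at hx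
  rcases hx with rfl | rfl <;> exact ⟨a, rfl⟩

end NE

section Main
variable {E : Type*} {T U : Set (List (Act E))}

theorem memA {s t u : List (Act E)} (hs : s ∈ T) (ht : t ∈ U) (ns : NoEvents s)
    (nt : NoEvents t) (h : Shuffle s t u) : u ∈ extchoice T U :=
  Or.inl (Or.inl ⟨s, hs, t, ht, ns, nt, h⟩)

theorem memB {a : E} {s s' t tr : List (Act E)} (hs : s ++ [Sum.inl a] ++ s' ∈ T)
    (ns : NoEvents s) (ht : t ∈ U) (nt : NoEvents t) (h : Shuffle s t tr) :
    tr ++ [Sum.inl a] ++ s' ∈ extchoice T U :=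
  Or.inl (Or.inr ⟨a, s, s', t, tr, hs, ns, ht, nt, h, rfl⟩)

theorem extchoice_swap_sub : extchoice T U ⊆ extchoice U T := by
  rintro v ((⟨s, hs, t, ht, ns, nt, hsh⟩ | ⟨a, s, s', t, tr, hs, ns, ht, nt, hsh, rfl⟩) |
    ⟨a, t, t', s, tr, ht, nt, hs, ns, hsh, rfl⟩)
  · exact Or.inl (Or.inl ⟨t, ht, s, hs, nt, ns, hsh.comm⟩)
  · exact Or.inr ⟨a, s, s', t, tr, hs, ns, ht, nt, hsh.comm, rfl⟩
  · exact Or.inl (Or.inr ⟨a, t, t', s, tr, ht, nt, hs, ns, hsh.comm, rfl⟩)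

theorem extchoice_comm (T U : Set (List (Act E))) : extchoice T U = extchoice U T :=
  Set.Subset.antisymm extchoice_swap_sub extchoice_swap_sub

theorem nil_mem (hT : Healthy T) : ([] : List (Act E)) ∈ T := by
  obtain ⟨w, hw⟩ := hT.1
  simpa using hT.2.1 [] w (by simpa using hw)

/-- Prefix closure, case A. -/
theorem prefA (hT : Healthy T) (hU : Healthy U) {s t p q : List (Act E)}
    (hs : s ∈ T) (ht : t ∈ U) (ns : NoEvents s) (nt : NoEvents t)
    (hsh : Shuffle s t (p ++ q)) : p ∈ extchoice T U := by
  obtain ⟨s1, s2, t1, t2, rfl, rfl, h1⟩ := shuffle_prefix hsh p q rfl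
  exact memA (hT.2.1 s1 s2 hs) (hU.2.1 t1 t2 ht) (noEvents_append.mp ns).1
    (noEvents_append.mp nt).1 h1

/-- Prefix closure, case B. -/
theorem prefB (hT : Healthy T) (hU : Healthy U) {a : E} {s s' t tr p q : List (Act E)}
    (hs : s ++ [Sum.inl a] ++ s' ∈ T) (ns : NoEvents s) (ht : t ∈ U) (nt : NoEvents t)
    (hsh : Shuffle s t tr) (heq : tr ++ [Sum.inl a] ++ s' = p ++ q) :
    p ∈ extchoice T U := by
  rw [List.append_assoc] at heq
  rcases List.append_eq_append_iff.mp heq with ⟨c, hc1, hc2⟩ | ⟨c, hc1, hc2⟩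
  · -- p = tr ++ c, [inl a] ++ s' = c ++ q
    subst hc1
    cases c with
    | nil =>
      simpa using memA (hT.2.1 s ([Sum.inl a] ++ s') (by simpa [List.append_assoc] using hs))
        ht ns nt hsh
    | cons y c =>
      injection hc2 with h1 h2
      subst h1
      subst h2
      simpa using memB (hT.2.1 (s ++ [Sum.inl a] ++ c) q (by simpa [List.append_assoc] using hs))
        ns ht nt hsh
  · -- tr = p ++ c
    subst hc1
    exact prefA hT hU (hT.2.1 s ([Sum.inl a] ++ s') (by simpa [List.append_assoc] using hs))
      ht ns nt hsh

/-- Offer healthiness, case A. -/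
theorem offA (hT : Healthy T) (hU : Healthy U) {s t tr0 tr' : List (Act E)} {a : E}
    (hs : s ∈ T) (ht : t ∈ U) (ns : NoEvents s) (nt : NoEvents t)
    (hsh : Shuffle s t (tr0 ++ Sum.inr a :: tr')) :
    tr0 ++ [Sum.inr a, Sum.inr a] ++ tr' ∈ extchoice T U ∧ tr0 ++ tr' ∈ extchoice T U := by
  rcases shuffle_middle hsh tr0 _ tr' rfl with ⟨s1, s2, rfl, hr⟩ | ⟨t1, t2, rfl, hr⟩
  · have hh := hT.2.2.1 s1 a s2 (by simpa using hs)
    have ns1 : NoEvents s1 := (noEvents_append.mp ns).1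
    have ns2 : NoEvents s2 := by
      have := (noEvents_append.mp ns).2
      exact fun x hx => this x (by simp [hx])
    constructor
    · exact memA hh.1 ht (noEvents_append.mpr ⟨noEvents_append.mpr ⟨ns1, noEvents_two a⟩, ns2⟩) nt (hr _)
    · exact memA hh.2 ht (noEvents_append.mpr ⟨ns1, ns2⟩) nt (by simpa using hr [])
  · have hh := hU.2.2.1 t1 a t2 (by simpa using ht)
    have nt1 : NoEvents t1 := (noEvents_append.mp nt).1
    have nt2 : NoEvents t2 := by
      have := (noEvents_append.mp nt).2
      exact fun x hx => this x (by simp [hx])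
    constructor
    · exact memA hs hh.1 ns (noEvents_append.mpr ⟨noEvents_append.mpr ⟨nt1, noEvents_two a⟩, nt2⟩) (hr _)
    · exact memA hs hh.2 ns (noEvents_append.mpr ⟨nt1, nt2⟩) (by simpa using hr [])

/-- Offer healthiness, case B. -/
theorem offB (hT : Healthy T) (hU : Healthy U) {a0 a : E} {s s' t tr tr0 tr' : List (Act E)}
    (hs : s ++ [Sum.inl a0] ++ s' ∈ T) (ns : NoEvents s) (ht : t ∈ U) (nt : NoEvents t)
    (hsh : Shuffle s t tr) (heq : tr ++ [Sum.inl a0] ++ s' = tr0 ++ [Sum.inr a] ++ tr') :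
    tr0 ++ [Sum.inr a, Sum.inr a] ++ tr' ∈ extchoice T U ∧ tr0 ++ tr' ∈ extchoice T U := by
  have heq' : tr ++ Sum.inl a0 :: s' = tr0 ++ Sum.inr a :: tr' := by simpa using heq
  rcases append_cons_eq_append_cons heq' with ⟨rfl, h2, rfl⟩ | ⟨m, rfl, rfl⟩ | ⟨m, rfl, rfl⟩
  · exact absurd h2 (by simp)
  · -- tr0 = tr ++ inl a0 :: m, s' = m ++ inr a :: tr'
    have hh := hT.2.2.1 (s ++ [Sum.inl a0] ++ m) a tr' (by simpa [List.append_assoc] using hs)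
    constructor
    · have := memB (a := a0) (s' := m ++ [Sum.inr a, Sum.inr a] ++ tr')
        (by simpa [List.append_assoc] using hh.1) ns ht nt hsh
      simpa [List.append_assoc] using this
    · have := memB (a := a0) (s' := m ++ tr')
        (by simpa [List.append_assoc] using hh.2) ns ht nt hsh
      simpa [List.append_assoc] using this
  · -- tr = tr0 ++ inr a :: m, tr' = m ++ inl a0 :: s'
    rcases shuffle_middle hsh tr0 _ m rfl with ⟨s1, s2, rfl, hr⟩ | ⟨t1, t2, rfl, hr⟩
    · have hh := hT.2.2.1 s1 a (s2 ++ [Sum.inl a0] ++ s') (by simpa [List.append_assoc] using hs)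
      have ns1 : NoEvents s1 := (noEvents_append.mp ns).1
      have ns2 : NoEvents s2 := by
        have := (noEvents_append.mp ns).2
        exact fun x hx => this x (by simp [hx])
      constructor
      · have := memB (a := a0) (s := s1 ++ [Sum.inr a, Sum.inr a] ++ s2) (s' := s')
          (by simpa [List.append_assoc] using hh.1)
          (noEvents_append.mpr ⟨noEvents_append.mpr ⟨ns1, noEvents_two a⟩, ns2⟩) ht nt (hr _)
        simpa [List.append_assoc] using this
      · have := memB (a := a0) (s := s1 ++ s2) (s' := s')
          (by simpa [List.append_assoc] using hh.2)
          (noEvents_append.mpr ⟨ns1, ns2⟩) ht nt (by simpa using hr [])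
        simpa [List.append_assoc] using this
    · have hh := hU.2.2.1 t1 a t2 (by simpa using ht)
      have nt1 : NoEvents t1 := (noEvents_append.mp nt).1
      have nt2 : NoEvents t2 := by
        have := (noEvents_append.mp nt).2
        exact fun x hx => this x (by simp [hx])
      constructor
      · have := memB (a := a0) (s' := s') hs ns hh.1
          (noEvents_append.mpr ⟨noEvents_append.mpr ⟨nt1, noEvents_two a⟩, nt2⟩) (hr _)
        simpa [List.append_assoc] using this
      · have := memB (a := a0) (s' := s') hs ns hh.2
          (noEvents_append.mpr ⟨nt1, nt2⟩) (by simpa using hr [])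
        simpa [List.append_assoc] using this

/-- Performing an offered event, case A. -/
theorem perfA (hT : Healthy T) (hU : Healthy U) {s t tr0 : List (Act E)} {a : E}
    (hs : s ∈ T) (ht : t ∈ U) (ns : NoEvents s) (nt : NoEvents t)
    (hsh : Shuffle s t (tr0 ++ [Sum.inr a])) : tr0 ++ [Sum.inl a] ∈ extchoice T U := by
  rcases shuffle_last hsh with ⟨s0, rfl, h0⟩ | ⟨t0, rfl, h0⟩
  · have hh : s0 ++ [Sum.inl a] ++ [] ∈ T := by simpa using hT.2.2.2.1 s0 a hs
    simpa using memB hh (noEvents_append.mp ns).1 ht nt h0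
  · rw [extchoice_comm]
    have hh : t0 ++ [Sum.inl a] ++ [] ∈ U := by simpa using hU.2.2.2.1 t0 a ht
    simpa using memB hh (noEvents_append.mp nt).1 hs ns h0.comm

/-- Performing an offered event, case B. -/
theorem perfB (hT : Healthy T) (hU : Healthy U) {a0 a : E} {s s' t tr tr0 : List (Act E)}
    (hs : s ++ [Sum.inl a0] ++ s' ∈ T) (ns : NoEvents s) (ht : t ∈ U) (nt : NoEvents t)
    (hsh : Shuffle s t tr) (heq : tr ++ [Sum.inl a0] ++ s' = tr0 ++ [Sum.inr a]) :
    tr0 ++ [Sum.inl a] ∈ extchoice T U := by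
  rcases s'.eq_nil_or_concat with rfl | ⟨s'', z, rfl⟩
  · have heq2 : tr ++ [Sum.inl a0] = tr0 ++ [Sum.inr a] := by simpa using heq
    obtain ⟨-, h2⟩ := List.append_inj' heq2 rfl
    simp at h2
  · have heq2 : (tr ++ [Sum.inl a0] ++ s'') ++ [z] = tr0 ++ [Sum.inr a] := by
      simpa [List.append_assoc] using heq
    obtain ⟨h1, h2⟩ := List.append_inj' heq2 rfl
    simp only [List.cons.injEq, and_true] at h2
    subst h2
    subst h1
    have hh := hT.2.2.2.1 (s ++ [Sum.inl a0] ++ s'') a (by simpa [List.append_assoc] using hs)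
    have := memB (a := a0) (s' := s'' ++ [Sum.inl a])
      (by simpa [List.append_assoc] using hh) ns ht nt hsh
    simpa [List.append_assoc] using this

/-- Offering before performing, case B. -/
theorem evB (hT : Healthy T) (hU : Healthy U) {a0 a : E} {s s' t tr tr0 tr' : List (Act E)}
    (hs : s ++ [Sum.inl a0] ++ s' ∈ T) (ns : NoEvents s) (ht : t ∈ U) (nt : NoEvents t)
    (hsh : Shuffle s t tr) (heq : tr ++ [Sum.inl a0] ++ s' = tr0 ++ [Sum.inl a] ++ tr') :
    tr0 ++ [Sum.inr a, Sum.inl a] ++ tr' ∈ extchoice T U := by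
  have heq' : tr ++ Sum.inl a0 :: s' = tr0 ++ Sum.inl a :: tr' := by simpa using heq
  rcases append_cons_eq_append_cons heq' with ⟨rfl, h2, rfl⟩ | ⟨m, rfl, rfl⟩ | ⟨m, rfl, rfl⟩
  · injection h2 with h2
    subst h2
    have hh := hT.2.2.2.2 s a0 s' hs
    have := memB (a := a0) (s := s ++ [Sum.inr a0]) (s' := s')
      (by simpa [List.append_assoc] using hh)
      (noEvents_append.mpr ⟨ns, fun x hx => ⟨a0, by simpa using hx⟩⟩) ht nt
      (shuffle_append_end hsh [Sum.inr a0])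
    simpa [List.append_assoc] using this
  · -- tr0 = tr ++ inl a0 :: m, s' = m ++ inl a :: tr'
    have hh := hT.2.2.2.2 (s ++ [Sum.inl a0] ++ m) a tr' (by simpa [List.append_assoc] using hs)
    have := memB (a := a0) (s' := m ++ [Sum.inr a, Sum.inl a] ++ tr')
      (by simpa [List.append_assoc] using hh) ns ht nt hsh
    simpa [List.append_assoc] using this
  · -- tr = tr0 ++ inl a :: m : impossible, tr has no events
    have hne := shuffle_noEvents ns nt hsh
    obtain ⟨b, hb⟩ := hne (Sum.inl a) (by simp)
    simp at hb

theorem extchoice_healthy' (hT : Healthy T) (hU : Healthy U) : Healthy (extchoice T U) := by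
  refine ⟨⟨[], memA (nil_mem hT) (nil_mem hU) (fun x hx => by simp at hx)
    (fun x hx => by simp at hx) .nil⟩, ?_, ?_, ?_, ?_⟩
  · rintro p q ((⟨s, hs, t, ht, ns, nt, hsh⟩ | ⟨a0, s, s', t, tr, hs, ns, ht, nt, hsh, heq⟩) |
      ⟨a0, t, t', s, tr, htm, nt, hsm, ns, hsh, heq⟩)
    · exact prefA hT hU hs ht ns nt hsh
    · exact prefB hT hU hs ns ht nt hsh heq.symm
    · rw [extchoice_comm]
      exact prefB hU hT htm nt hsm ns hsh.comm heq.symm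
  · rintro tr0 a tr' ((⟨s, hs, t, ht, ns, nt, hsh⟩ |
      ⟨a0, s, s', t, tr, hs, ns, ht, nt, hsh, heq⟩) |
      ⟨a0, t, t', s, tr, htm, nt, hsm, ns, hsh, heq⟩)
    · exact offA hT hU hs ht ns nt (by simpa using hsh)
    · exact offB hT hU hs ns ht nt hsh heq.symm
    · have h2 := offB hU hT htm nt hsm ns hsh.comm heq.symm
      rw [extchoice_comm U T] at h2
      exact h2
  · rintro tr0 a ((⟨s, hs, t, ht, ns, nt, hsh⟩ |
      ⟨a0, s, s', t, tr, hs, ns, ht, nt, hsh, heq⟩) |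
      ⟨a0, t, t', s, tr, htm, nt, hsm, ns, hsh, heq⟩)
    · exact perfA hT hU hs ht ns nt hsh
    · exact perfB hT hU hs ns ht nt hsh heq.symm
    · rw [extchoice_comm]
      exact perfB hU hT htm nt hsm ns hsh.comm heq.symm
  · rintro tr0 a tr' ((⟨s, hs, t, ht, ns, nt, hsh⟩ |
      ⟨a0, s, s', t, tr, hs, ns, ht, nt, hsh, heq⟩) |
      ⟨a0, t, t', s, tr, htm, nt, hsm, ns, hsh, heq⟩)
    · obtain ⟨b, hb⟩ := shuffle_noEvents ns nt hsh (Sum.inl a) (by simp)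
      simp at hb
    · exact evB hT hU hs ns ht nt hsh heq.symm
    · rw [extchoice_comm]
      exact evB hU hT htm nt hsm ns hsh.comm heq.symm

end Main

/-- External choice preserves healthiness. -/
theorem extchoice_healthy {E : Type*} (T U : Set (List (Act E)))
    (hT : Healthy T) (hU : Healthy U) : Healthy (extchoice T U) :=
  extchoice_healthy' hT hU
end

section
/- Let L be a labelled transition system over Σ and let P, Q be states of L. Then availSetsTraces(P) = availSetsTraces(Q) if and only if P and Q may pass exactly the same set-tests, i.e. for every set-test T, P may T ⟺ Q may T (full abstraction of the Availability Sets Traces Model with respect to may-testing). -/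
variable {E : Type*}

/-- An availability-set action: `Sum.inl a` is an ordinary event `a ∈ Σ`, and `Sum.inr A`
is the offer `◎A` of a set `A ⊆ Σ` of events. -/
abbrev ActS (E : Type*) := E ⊕ Set E

/-- `HasTraceS step P tr` holds if `tr` is an availability-sets trace of the state `P`:
the derived transitions are the ordinary ones together with self-loops `P ⟶◎A P` whenever
every event of `A` is available at `P`. -/
inductive HasTraceS {S : Type*} (step : S → Option E → S → Prop) : S → List (ActS E) → Prop
  | nil (P : S) : HasTraceS step P []
  | tau {P Q : S} {tr} : step P none Q → HasTraceS step Q tr → HasTraceS step P tr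
  | ev {P Q : S} {a : E} {tr} : step P (some a) Q → HasTraceS step Q tr →
      HasTraceS step P (Sum.inl a :: tr)
  | offer {P : S} {A : Set E} {tr} : (∀ a ∈ A, ∃ Q, step P (some a) Q) →
      HasTraceS step P tr → HasTraceS step P (Sum.inr A :: tr)

/-- The set of availability-sets traces of a state `P`. -/
def availSetsTraces {S : Type*} (step : S → Option E → S → Prop) (P : S) :
    Set (List (ActS E)) :=
  {tr | HasTraceS step P tr}

/-- Set-tests: `T ::= SUCCESS | a → T | Ready A & T` for `A ⊆ Σ`. -/
inductive TestS (E : Type*)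
  | success : TestS E
  | pre : E → TestS E → TestS E
  | ready : Set E → TestS E → TestS E

/-- `P ⟹τ P'`: `P'` is reachable from `P` by zero or more τ-transitions. -/
def TauStar {S : Type*} (step : S → Option E → S → Prop) : S → S → Prop :=
  Relation.ReflTransGen (fun P Q => step P none Q)

/-- `MayPassS step P T`: the state `P` may pass the set-test `T`. -/
inductive MayPassS {S : Type*} (step : S → Option E → S → Prop) : S → TestS E → Prop
  | success (P : S) : MayPassS step P .success
  | pre {P P' Q : S} {a : E} {T : TestS E} : TauStar step P P' → step P' (some a) Q →
      MayPassS step Q T → MayPassS step P (.pre a T)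
  | ready {P P' : S} {A : Set E} {T : TestS E} : TauStar step P P' →
      (∀ a ∈ A, ∃ Q, step P' (some a) Q) → MayPassS step P' T →
      MayPassS step P (.ready A T)

/-- The trace corresponding to a set-test. -/
def traceOfTest : TestS E → List (ActS E)
  | .success => []
  | .pre a T => Sum.inl a :: traceOfTest T
  | .ready A T => Sum.inr A :: traceOfTest T

/-- The set-test corresponding to a trace. -/
def testOfTrace : List (ActS E) → TestS E
  | [] => .success
  | Sum.inl a :: tr => .pre a (testOfTrace tr)
  | Sum.inr A :: tr => .ready A (testOfTrace tr)

lemma traceOfTest_testOfTrace (tr : List (ActS E)) : traceOfTest (testOfTrace tr) = tr := by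
  induction tr with
  | nil => rfl
  | cons x tr ih => cases x <;> simp [testOfTrace, traceOfTest, ih]

lemma testOfTrace_traceOfTest (T : TestS E) : testOfTrace (traceOfTest T) = T := by
  induction T with
  | success => rfl
  | pre a T ih => simp [traceOfTest, testOfTrace, ih]
  | ready A T ih => simp [traceOfTest, testOfTrace, ih]

lemma hasTraceS_of_tauStar {S : Type*} {step : S → Option E → S → Prop} {P P' : S}
    {tr : List (ActS E)} (h : TauStar step P P') (ht : HasTraceS step P' tr) :
    HasTraceS step P tr := by
  induction h using Relation.ReflTransGen.head_induction_on with
  | refl => exact ht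
  | head s _ ih => exact .tau s ih

lemma mayPassS_of_tau {S : Type*} {step : S → Option E → S → Prop} {P P' : S}
    {T : TestS E} (h : step P none P') (hm : MayPassS step P' T) :
    MayPassS step P T := by
  cases hm with
  | success => exact .success P
  | pre hts hs hm => exact .pre (Relation.ReflTransGen.head h hts) hs hm
  | ready hts ho hm => exact .ready (Relation.ReflTransGen.head h hts) ho hm

lemma mayPassS_testOfTrace {S : Type*} {step : S → Option E → S → Prop} {P : S}
    {tr : List (ActS E)} (ht : HasTraceS step P tr) : MayPassS step P (testOfTrace tr) := by
  induction ht with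
  | nil => exact .success _
  | tau hs _ ih => exact mayPassS_of_tau hs ih
  | ev hs _ ih => exact .pre Relation.ReflTransGen.refl hs ih
  | offer ho _ ih => exact .ready Relation.ReflTransGen.refl ho ih

lemma hasTraceS_traceOfTest {S : Type*} {step : S → Option E → S → Prop} {P : S}
    {T : TestS E} (hm : MayPassS step P T) : HasTraceS step P (traceOfTest T) := by
  induction hm with
  | success => exact .nil _
  | pre hts hs _ ih => exact hasTraceS_of_tauStar hts (.ev hs ih)
  | ready hts ho _ ih => exact hasTraceS_of_tauStar hts (.offer ho ih)

lemma mayPassS_iff_hasTraceS {S : Type*} {step : S → Option E → S → Prop} {P : S}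
    {T : TestS E} : MayPassS step P T ↔ HasTraceS step P (traceOfTest T) := by
  constructor
  · exact hasTraceS_traceOfTest
  · intro h
    have := mayPassS_testOfTrace h
    rwa [testOfTrace_traceOfTest] at this

/-- Full abstraction of the Availability Sets Traces Model with respect to may-testing:
two processes have the same availability-sets traces iff they may pass exactly the same
set-tests. -/
theorem availSetsTraces_full_abstraction {E S : Type*} (step : S → Option E → S → Prop)
    (P Q : S) :
    availSetsTraces step P = availSetsTraces step Q ↔
      ∀ T : TestS E, MayPassS step P T ↔ MayPassS step Q T := by
  constructor
  · intro h T
    rw [mayPassS_iff_hasTraceS, mayPassS_iff_hasTraceS]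
    exact Set.ext_iff.mp h _
  · intro h
    ext tr
    have := h (testOfTrace tr)
    rw [mayPassS_iff_hasTraceS, mayPassS_iff_hasTraceS, traceOfTest_testOfTrace] at this
    exact this
end
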